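/- arXiv:1705.01269 — 2 statements merged into one kernel-verified Lean document; each statement's English description precedes it below -/
import Mathlib

section
/- For integers r ≥ 1 and s ≥ 1, ζ(r, s̄) = (1/(Γ(r)Γ(s))) ∫₀^∞ ∫₀^∞ t^{s-1} u^{r-1} / ((e^t + 1)(e^{t+u} + 1)) du dt. -/
open Filter Finset Real

/-- `zeta k` : the Riemann zeta value `ζ(k) = Σ_{m≥1} 1/m^k`, with the convention `ζ(0) = -1/2`. -/
noncomputable def zeta (k : ℕ) : ℝ :=
  if k = 0 then -1/2 else limUnder atTop (fun N => ∑ m ∈ Finset.range N, 1/((m+1 : ℝ))^k)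

/-- `zetaA k` : the alternating zeta value `ζ(k̄) = Σ_{m≥1} (-1)^m/m^k`,
with the convention `ζ(0̄) = -1/2`. -/
noncomputable def zetaA (k : ℕ) : ℝ :=
  if k = 0 then -1/2 else
    limUnder atTop (fun N => ∑ m ∈ Finset.range N, (-1 : ℝ)^(m+1)/((m+1 : ℝ))^k)

/-- `dzeta r s = ζ(r,s) = Σ_{m≥2} (1/m^s) Σ_{j=1}^{m-1} 1/j^r`. -/
noncomputable def dzeta (r s : ℕ) : ℝ :=
  limUnder atTop (fun N => ∑ m ∈ Finset.range N,
    (1/((m+2 : ℝ))^s) * ∑ j ∈ Finset.range (m+1), 1/((j+1 : ℝ))^r)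

/-- `dzetaA1 r s = ζ(r̄,s) = Σ_{m≥2} (1/m^s) Σ_{j=1}^{m-1} (-1)^j/j^r`. -/
noncomputable def dzetaA1 (r s : ℕ) : ℝ :=
  limUnder atTop (fun N => ∑ m ∈ Finset.range N,
    (1/((m+2 : ℝ))^s) * ∑ j ∈ Finset.range (m+1), (-1 : ℝ)^(j+1)/((j+1 : ℝ))^r)

/-- `dzetaA2 r s = ζ(r,s̄) = Σ_{m≥2} ((-1)^m/m^s) Σ_{j=1}^{m-1} 1/j^r`. -/
noncomputable def dzetaA2 (r s : ℕ) : ℝ :=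
  limUnder atTop (fun N => ∑ m ∈ Finset.range N,
    ((-1 : ℝ)^(m+2)/((m+2 : ℝ))^s) * ∑ j ∈ Finset.range (m+1), 1/((j+1 : ℝ))^r)

/-- `dzetaA3 r s = ζ(r̄,s̄) = Σ_{m≥2} ((-1)^m/m^s) Σ_{j=1}^{m-1} (-1)^j/j^r`. -/
noncomputable def dzetaA3 (r s : ℕ) : ℝ :=
  limUnder atTop (fun N => ∑ m ∈ Finset.range N,
    ((-1 : ℝ)^(m+2)/((m+2 : ℝ))^s) * ∑ j ∈ Finset.range (m+1), (-1 : ℝ)^(j+1)/((j+1 : ℝ))^r)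

/-!
Expanding `1 / (eˣ + 1) = ∑_{n ≥ 0} (-1)ⁿ e^{-(n+1)x}` in both factors of the integrand and
integrating term by term with `∫₀^∞ t^{s-1} e^{-ct} dt = Γ(s) / cˢ` gives
`Γ(r) Γ(s) ∑_{a,b ≥ 0} (-1)^{a+b} / ((b+1)^r (a+b+2)^s)`, which is `ζ(r, s̄)` after the change of
indices `j = b + 1`, `m = a + b + 2`. For `r = 1` this double series does not converge absolutely,
so both expansions are truncated after `N` terms: the truncation error of the integrand is
`O(t^{s-1} e^{-(N+1)t} u^{r-1} e^{-u})`, hence the truncated integral is `Γ(r) Γ(s)` times the sum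
over the square `a, b < N`, up to `O(1/N)`. The square differs from the `N`-th partial sum of
`ζ(r, s̄)` (the triangle `a + b < N`) by a corner in which, for each fixed `b`, the sum over `a` is
alternating with decreasing terms, hence at most `(N + 2)^{-s}`; summing over `b` gives
`O(log N / N)`.
-/

open MeasureTheory Set Topology

section Alternating

variable {R : Type*} [CommRing R] [LinearOrder R] [IsStrictOrderedRing R]

lemma sum_range_alternating_mem_Icc {c : ℕ → R} (hc : Antitone c) (hc0 : ∀ k, 0 ≤ c k)
    (n : ℕ) : ∑ i ∈ range n, (-1) ^ i * c i ∈ Icc 0 (c 0) := by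
  induction n generalizing c with
  | zero => simpa using hc0 0
  | succ n ih =>
    obtain ⟨h0, h1⟩ := ih (fun _ _ h => hc (Nat.succ_le_succ h)) (fun k => hc0 (k + 1))
    rw [sum_range_succ', pow_zero, one_mul]
    simp only [pow_succ, mul_neg_one, neg_mul, sum_neg_distrib]
    constructor <;> linarith [hc (Nat.zero_le 1)]

lemma abs_sum_Ico_alternating_le {c : ℕ → R} (hc : Antitone c) (hc0 : ∀ k, 0 ≤ c k)
    (m n : ℕ) : |∑ i ∈ Ico m n, (-1) ^ i * c i| ≤ c m := by
  obtain ⟨h0, h1⟩ := sum_range_alternating_mem_Icc (c := fun i => c (m + i))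
    (fun _ _ h => hc (Nat.add_le_add_left h m)) (fun _ => hc0 _) (n - m)
  rw [sum_Ico_eq_sum_range]
  simp_rw [pow_add, mul_assoc, ← mul_sum, abs_mul, abs_pow, abs_neg, abs_one, one_pow, one_mul,
    abs_of_nonneg h0]
  simpa using h1

end Alternating

noncomputable def fermiDiracPartialSum (N : ℕ) (t : ℝ) : ℝ :=
  ∑ n ∈ range N, (-1) ^ n * exp (-((n + 1) * t))

lemma fermiDiracPartialSum_mem_Icc (N : ℕ) {t : ℝ} (ht : 0 ≤ t) :
    fermiDiracPartialSum N t ∈ Icc 0 (exp (-t)) := by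
  have hc : Antitone fun n : ℕ => exp (-((n + 1) * t)) := fun m n h => by
    have : (m : ℝ) ≤ n := by exact_mod_cast h
    simp only [exp_le_exp, neg_le_neg_iff]
    gcongr
  simpa [fermiDiracPartialSum] using
    sum_range_alternating_mem_Icc hc (fun _ => (exp_pos _).le) N

lemma abs_one_div_exp_add_one_sub_fermiDiracPartialSum_le (N : ℕ) (t : ℝ) :
    |1 / (exp t + 1) - fermiDiracPartialSum N t| ≤ exp (-((N + 1) * t)) := by
  set x := exp (-t) with hx
  have hx0 : 0 < x := exp_pos _
  have hpow (n : ℕ) : exp (-((n + 1) * t)) = x ^ (n + 1) := by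
    rw [hx, ← exp_nat_mul]; push_cast; ring_nf
  have hgeom := mul_neg_geom_sum (-x) N
  have hP : fermiDiracPartialSum N t = x * ∑ n ∈ range N, (-x) ^ n := by
    simp_rw [fermiDiracPartialSum, hpow, mul_sum, neg_pow x, pow_succ]
    exact sum_congr rfl fun _ _ => by ring
  have hinv : 1 / (exp t + 1) = x / (1 + x) := by
    rw [hx, exp_neg]; field_simp
  have hdiff : 1 / (exp t + 1) - fermiDiracPartialSum N t = x * (-x) ^ N / (1 + x) := by
    rw [hinv, hP, eq_div_iff (by positivity), sub_mul, div_mul_cancel₀ _ (by positivity)]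
    linear_combination (-x) * hgeom
  rw [hdiff, hpow, abs_div, abs_mul, abs_pow, abs_neg, abs_of_pos hx0,
    abs_of_pos (by positivity : (0 : ℝ) < 1 + x), ← pow_succ']
  exact div_le_self (by positivity) (by linarith)

lemma integral_pow_mul_exp_neg_mul {s : ℕ} (hs : 1 ≤ s) {a : ℝ} (ha : 0 < a) :
    ∫ t in Ioi (0 : ℝ), t ^ (s - 1) * exp (-(a * t)) = Gamma s / a ^ s := by
  convert integral_rpow_mul_exp_neg_mul_Ioi (a := s) (Nat.cast_pos.mpr hs) ha using 1
  · refine setIntegral_congr_fun measurableSet_Ioi fun t _ => ?_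
    rw [← rpow_natCast, Nat.cast_sub hs, Nat.cast_one]
  · rw [one_div, inv_rpow ha.le, rpow_natCast, div_eq_inv_mul]

lemma integrableOn_pow_mul_exp_neg_mul (k : ℕ) {a : ℝ} (ha : 0 < a) :
    IntegrableOn (fun t => t ^ k * exp (-(a * t))) (Ioi 0) := by
  have h := integral_pow_mul_exp_neg_mul (s := k + 1) (by omega) ha
  rw [Nat.add_sub_cancel] at h
  exact Integrable.of_integral_ne_zero (by rw [h]; positivity)

lemma abs_one_div_mul_sub_fermiDiracPartialSum_mul_le (N : ℕ) {t u : ℝ} (ht : 0 ≤ t)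
    (hu : 0 ≤ u) :
    |1 / ((exp t + 1) * (exp (t + u) + 1)) -
        fermiDiracPartialSum N t * fermiDiracPartialSum N (t + u)| ≤
      2 * exp (-((N + 1) * t)) * exp (-u) := by
  set P := fermiDiracPartialSum N t
  set Q := fermiDiracPartialSum N (t + u)
  have ha : 1 / (exp t + 1) ≤ exp (-t) := by
    rw [exp_neg, one_div]
    exact inv_anti₀ (exp_pos t) (by linarith)
  obtain ⟨hQ0, hQ⟩ := fermiDiracPartialSum_mem_Icc N (add_nonneg ht hu)
  have hP := abs_one_div_exp_add_one_sub_fermiDiracPartialSum_le N t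
  have hQ' := abs_one_div_exp_add_one_sub_fermiDiracPartialSum_le N (t + u)
  calc |1 / ((exp t + 1) * (exp (t + u) + 1)) - P * Q|
      = |1 / (exp t + 1) * (1 / (exp (t + u) + 1) - Q) + Q * (1 / (exp t + 1) - P)| := by
        rw [← one_div_mul_one_div]; congr 1; ring
    _ ≤ 1 / (exp t + 1) * |1 / (exp (t + u) + 1) - Q| + Q * |1 / (exp t + 1) - P| := by
        refine (abs_add_le _ _).trans_eq ?_
        rw [abs_mul, abs_mul, abs_of_nonneg (by positivity), abs_of_nonneg hQ0]
    _ ≤ exp (-t) * exp (-((N + 1) * (t + u))) + exp (-(t + u)) * exp (-((N + 1) * t)) := by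
        gcongr
    _ ≤ 2 * exp (-((N + 1) * t)) * exp (-u) := by
        have h1 : exp (-t) * exp (-((N + 1) * (t + u))) ≤ exp (-((N + 1) * t)) * exp (-u) := by
          simp only [← exp_add, exp_le_exp]; nlinarith
        have h2 : exp (-(t + u)) * exp (-((N + 1) * t)) ≤ exp (-((N + 1) * t)) * exp (-u) := by
          simp only [← exp_add, exp_le_exp]; nlinarith
        linarith

noncomputable def doubleIntegrand (r s : ℕ) (t u : ℝ) : ℝ :=
  t ^ (s - 1) * u ^ (r - 1) / ((exp t + 1) * (exp (t + u) + 1))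

noncomputable def truncatedIntegrand (r s N : ℕ) (t u : ℝ) : ℝ :=
  t ^ (s - 1) * u ^ (r - 1) * (fermiDiracPartialSum N t * fermiDiracPartialSum N (t + u))

/-- The square `a, b < N` of the double series, in the coordinates `j = b`, `m = a + b`. -/
noncomputable def squareSum (r s N : ℕ) : ℝ :=
  ∑ j ∈ range N, ∑ m ∈ Ico j (N + j), (-1) ^ m / ((j + 1 : ℝ) ^ r * (m + 2 : ℝ) ^ s)

lemma abs_doubleIntegrand_sub_truncatedIntegrand_le (r s N : ℕ) {t u : ℝ} (ht : 0 ≤ t)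
    (hu : 0 ≤ u) :
    |doubleIntegrand r s t u - truncatedIntegrand r s N t u| ≤
      2 * ((t ^ (s - 1) * exp (-((N + 1) * t))) * (u ^ (r - 1) * exp (-(1 * u)))) := by
  rw [doubleIntegrand, truncatedIntegrand, ← mul_one_div, ← mul_sub, abs_mul,
    abs_of_nonneg (by positivity)]
  calc t ^ (s - 1) * u ^ (r - 1) * |1 / ((exp t + 1) * (exp (t + u) + 1)) -
        fermiDiracPartialSum N t * fermiDiracPartialSum N (t + u)|
      ≤ t ^ (s - 1) * u ^ (r - 1) * (2 * exp (-((N + 1) * t)) * exp (-u)) := by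
        gcongr
        exact abs_one_div_mul_sub_fermiDiracPartialSum_mul_le N ht hu
    _ = _ := by ring_nf

lemma truncatedIntegrand_eq_sum (r s N : ℕ) (t u : ℝ) :
    truncatedIntegrand r s N t u = ∑ p ∈ range N ×ˢ range N, (-1) ^ (p.1 + p.2) *
      ((t ^ (s - 1) * exp (-((p.1 + p.2 + 2) * t))) * (u ^ (r - 1) * exp (-((p.2 + 1) * u)))) := by
  simp_rw [sum_product, truncatedIntegrand, fermiDiracPartialSum, sum_mul_sum, mul_sum]
  refine sum_congr rfl fun a _ => sum_congr rfl fun b _ => ?_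
  have h : exp (-((a + 1) * t)) * exp (-((b + 1) * (t + u))) =
      exp (-((a + b + 2) * t)) * exp (-((b + 1) * u)) := by
    rw [← exp_add, ← exp_add]; ring_nf
  rw [pow_add]
  linear_combination t ^ (s - 1) * u ^ (r - 1) * (-1) ^ a * (-1) ^ b * h

local notation "μ₊" => volume.restrict (Ioi (0 : ℝ))

lemma ae_mem_Ioi_prod_Ioi : ∀ᵐ z ∂(μ₊.prod μ₊), z ∈ Ioi (0 : ℝ) ×ˢ Ioi (0 : ℝ) := by
  rw [Measure.prod_restrict]
  exact ae_restrict_mem (measurableSet_Ioi.prod measurableSet_Ioi)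

lemma integrable_prod_pow_mul_exp_neg_mul (p q : ℕ) {a b : ℝ} (ha : 0 < a) (hb : 0 < b) :
    Integrable (fun z : ℝ × ℝ => (z.1 ^ p * exp (-(a * z.1))) * (z.2 ^ q * exp (-(b * z.2))))
      (μ₊.prod μ₊) :=
  (integrableOn_pow_mul_exp_neg_mul p ha).mul_prod (integrableOn_pow_mul_exp_neg_mul q hb)

lemma integrable_doubleIntegrand (r s : ℕ) :
    Integrable (Function.uncurry (doubleIntegrand r s)) (μ₊.prod μ₊) := by
  have hcont : Continuous (Function.uncurry (doubleIntegrand r s)) :=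
    Continuous.div (by fun_prop) (by fun_prop) fun _ => by positivity
  refine ((integrable_prod_pow_mul_exp_neg_mul (s - 1) (r - 1) one_pos one_pos).const_mul 2).mono'
    hcont.aestronglyMeasurable ?_
  filter_upwards [ae_mem_Ioi_prod_Ioi] with z ⟨ht, hu⟩
  -- the truncation with `N = 0` vanishes, so its error bound is a domination
  simpa [Function.uncurry_def, truncatedIntegrand, fermiDiracPartialSum] using
    abs_doubleIntegrand_sub_truncatedIntegrand_le r s 0 (le_of_lt ht) (le_of_lt hu)

lemma integrable_truncatedIntegrand_term (r s a b : ℕ) :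
    Integrable (fun z : ℝ × ℝ => (-1) ^ (a + b) *
      ((z.1 ^ (s - 1) * exp (-((a + b + 2) * z.1))) * (z.2 ^ (r - 1) * exp (-((b + 1) * z.2)))))
      (μ₊.prod μ₊) :=
  (integrable_prod_pow_mul_exp_neg_mul _ _ (by positivity) (by positivity)).const_mul _

lemma integrable_truncatedIntegrand (r s N : ℕ) :
    Integrable (Function.uncurry (truncatedIntegrand r s N)) (μ₊.prod μ₊) := by
  simp_rw [Function.uncurry_def, truncatedIntegrand_eq_sum]
  exact integrable_finsetSum _ fun p _ => integrable_truncatedIntegrand_term r s p.1 p.2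

lemma integral_truncatedIntegrand_term {r s : ℕ} (hr : 1 ≤ r) (hs : 1 ≤ s) (a b : ℕ) :
    ∫ z, (-1) ^ (a + b) * ((z.1 ^ (s - 1) * exp (-((a + b + 2) * z.1))) *
      (z.2 ^ (r - 1) * exp (-((b + 1) * z.2)))) ∂(μ₊.prod μ₊) =
      (-1) ^ (a + b) * (Gamma s / (a + b + 2 : ℝ) ^ s * (Gamma r / (b + 1 : ℝ) ^ r)) := by
  rw [integral_const_mul, integral_prod_mul (fun t => t ^ (s - 1) * exp (-((a + b + 2) * t)))
    (fun u => u ^ (r - 1) * exp (-((b + 1) * u))), integral_pow_mul_exp_neg_mul hs (by positivity),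
    integral_pow_mul_exp_neg_mul hr (by positivity)]

lemma integral_truncatedIntegrand {r s : ℕ} (hr : 1 ≤ r) (hs : 1 ≤ s) (N : ℕ) :
    ∫ z, Function.uncurry (truncatedIntegrand r s N) z ∂(μ₊.prod μ₊) =
      Gamma r * Gamma s * squareSum r s N := by
  simp_rw [Function.uncurry_def, truncatedIntegrand_eq_sum]
  rw [integral_finsetSum _ fun p _ => integrable_truncatedIntegrand_term r s p.1 p.2,
    sum_congr rfl fun p _ => integral_truncatedIntegrand_term hr hs p.1 p.2, sum_product,
    sum_comm, squareSum, mul_sum]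
  refine sum_congr rfl fun b _ => ?_
  rw [sum_Ico_eq_sum_range, Nat.add_sub_cancel, mul_sum]
  refine sum_congr rfl fun a _ => ?_
  push_cast
  ring

lemma abs_integral_doubleIntegrand_sub_squareSum_le {r s : ℕ} (hr : 1 ≤ r) (hs : 1 ≤ s)
    (N : ℕ) :
    |(∫ t in Ioi (0 : ℝ), ∫ u in Ioi (0 : ℝ), doubleIntegrand r s t u) -
        Gamma r * Gamma s * squareSum r s N| ≤ 2 * (Gamma r * Gamma s) / (N + 1) ^ s := by
  have hN : (0 : ℝ) < N + 1 := by positivity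
  have hI : (∫ t in Ioi (0 : ℝ), ∫ u in Ioi (0 : ℝ), doubleIntegrand r s t u) =
      ∫ z, Function.uncurry (doubleIntegrand r s) z ∂(μ₊.prod μ₊) :=
    (integral_prod _ (integrable_doubleIntegrand r s)).symm
  rw [hI, ← integral_truncatedIntegrand hr hs N,
    ← integral_sub (integrable_doubleIntegrand r s) (integrable_truncatedIntegrand r s N)]
  refine (norm_integral_le_of_norm_le (f := fun z => Function.uncurry (doubleIntegrand r s) z -
      Function.uncurry (truncatedIntegrand r s N) z)
    ((integrable_prod_pow_mul_exp_neg_mul (s - 1) (r - 1) hN one_pos).const_mul 2) ?_).trans_eq ?_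
  · filter_upwards [ae_mem_Ioi_prod_Ioi] with z ⟨ht, hu⟩
    exact abs_doubleIntegrand_sub_truncatedIntegrand_le r s N ht.le hu.le
  · rw [integral_const_mul, integral_prod_mul (fun t => t ^ (s - 1) * exp (-((N + 1) * t)))
      (fun u => u ^ (r - 1) * exp (-(1 * u))), integral_pow_mul_exp_neg_mul hs hN,
      integral_pow_mul_exp_neg_mul hr one_pos, one_pow, div_one]
    ring

noncomputable def dzetaA2PartialSum (r s N : ℕ) : ℝ :=
  ∑ m ∈ range N,
    ((-1 : ℝ) ^ (m + 2) / ((m + 2 : ℝ)) ^ s) * ∑ j ∈ range (m + 1), 1 / ((j + 1 : ℝ)) ^ r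

noncomputable def cornerSum (r s N : ℕ) : ℝ :=
  ∑ j ∈ range N, ∑ m ∈ Ico N (N + j), (-1) ^ m / ((j + 1 : ℝ) ^ r * (m + 2 : ℝ) ^ s)

lemma squareSum_eq_dzetaA2PartialSum_add_cornerSum (r s N : ℕ) :
    squareSum r s N = dzetaA2PartialSum r s N + cornerSum r s N := by
  rw [squareSum, cornerSum, sum_congr rfl fun j hj =>
    (sum_Ico_consecutive _ (mem_range.1 hj).le (Nat.le_add_right N j)).symm, sum_add_distrib]
  congr 1
  rw [dzetaA2PartialSum, range_eq_Ico, sum_Ico_Ico_comm]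
  refine sum_congr rfl fun m _ => ?_
  rw [← range_eq_Ico, mul_sum]
  refine sum_congr rfl fun j _ => ?_
  ring

lemma abs_cornerSum_le {r s : ℕ} (hr : 1 ≤ r) (hs : 1 ≤ s) (N : ℕ) :
    |cornerSum r s N| ≤ harmonic N / (N + 2) := by
  have hterm (j : ℕ) :
      |∑ m ∈ Ico N (N + j), (-1) ^ m / ((j + 1 : ℝ) ^ r * (m + 2 : ℝ) ^ s)| ≤
        1 / ((j + 1 : ℝ) ^ r * (N + 2 : ℝ) ^ s) := by
    have hc : Antitone fun m : ℕ => 1 / ((j + 1 : ℝ) ^ r * (m + 2 : ℝ) ^ s) := fun m n h => by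
      have : (m : ℝ) ≤ n := by exact_mod_cast h
      apply one_div_le_one_div_of_le (by positivity)
      gcongr
    simpa only [mul_one_div] using
      abs_sum_Ico_alternating_le hc (fun _ => by positivity) N (N + j)
  calc |cornerSum r s N|
      ≤ ∑ j ∈ range N, 1 / ((j + 1 : ℝ) ^ r * (N + 2 : ℝ) ^ s) :=
        (abs_sum_le_sum_abs _ _).trans (sum_le_sum fun j _ => hterm j)
    _ ≤ ∑ j ∈ range N, 1 / ((j + 1 : ℝ) * (N + 2)) := by
        gcongr with j
        · exact le_self_pow₀ (by linarith [j.cast_nonneg (α := ℝ)]) (by omega)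
        · exact le_self_pow₀ (by linarith [N.cast_nonneg (α := ℝ)]) (by omega)
    _ = harmonic N / (N + 2) := by
        rw [harmonic, Rat.cast_sum, sum_div]
        refine sum_congr rfl fun j _ => ?_
        push_cast
        field_simp

lemma tendsto_cornerSum {r s : ℕ} (hr : 1 ≤ r) (hs : 1 ≤ s) :
    Tendsto (cornerSum r s) atTop (𝓝 0) := by
  have hlog : Tendsto (fun N : ℕ => log N / (N + 2)) atTop (𝓝 0) := by
    simpa only [pow_one, one_mul, Function.comp_def] using
      (tendsto_pow_log_div_mul_add_atTop 1 2 1 one_ne_zero).comp tendsto_natCast_atTop_atTop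
  have hinv : Tendsto (fun N : ℕ => 1 / ((N : ℝ) + 2)) atTop (𝓝 0) :=
    tendsto_const_nhds.div_atTop (tendsto_atTop_add_const_right _ 2 tendsto_natCast_atTop_atTop)
  refine squeeze_zero_norm (fun N => (abs_cornerSum_le hr hs N).trans ?_)
    (by simpa only [add_zero] using hinv.add hlog)
  rw [← add_div]
  gcongr
  exact harmonic_le_one_add_log N

lemma tendsto_squareSum {r s : ℕ} (hr : 1 ≤ r) (hs : 1 ≤ s) :
    Tendsto (squareSum r s) atTop (𝓝 (1 / (Gamma r * Gamma s) *
      ∫ t in Ioi (0 : ℝ), ∫ u in Ioi (0 : ℝ), doubleIntegrand r s t u)) := by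
  have hΓ : 0 < Gamma r * Gamma s := by positivity
  rw [tendsto_iff_norm_sub_tendsto_zero]
  refine squeeze_zero (fun _ => norm_nonneg _) (fun N => ?_)
    (by simpa only [mul_zero] using tendsto_one_div_add_atTop_nhds_zero_nat.const_mul (2 : ℝ))
  set I := ∫ t in Ioi (0 : ℝ), ∫ u in Ioi (0 : ℝ), doubleIntegrand r s t u
  have hN : (N + 1 : ℝ) ≤ (N + 1) ^ s :=
    le_self_pow₀ (by linarith [N.cast_nonneg (α := ℝ)]) (by omega)
  have hdiff : squareSum r s N - 1 / (Gamma r * Gamma s) * I =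
      -(I - Gamma r * Gamma s * squareSum r s N) / (Gamma r * Gamma s) := by
    field_simp
    ring
  rw [Real.norm_eq_abs, hdiff, abs_div, abs_neg, abs_of_pos hΓ, div_le_iff₀ hΓ]
  calc |I - Gamma r * Gamma s * squareSum r s N|
      ≤ 2 * (Gamma r * Gamma s) / (N + 1) ^ s :=
        abs_integral_doubleIntegrand_sub_squareSum_le hr hs N
    _ ≤ 2 * (Gamma r * Gamma s) / (N + 1) := by gcongr
    _ = 2 * (1 / (N + 1)) * (Gamma r * Gamma s) := by ring

theorem dzetaA2_integral (r s : ℕ) (hr : 1 ≤ r) (hs : 1 ≤ s) :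
    dzetaA2 r s = (1/(Real.Gamma r * Real.Gamma s)) *
      ∫ t in Set.Ioi (0 : ℝ), ∫ u in Set.Ioi (0 : ℝ),
        t^(s-1) * u^(r-1) / ((Real.exp t + 1) * (Real.exp (t + u) + 1)) := by
  have h := (tendsto_squareSum hr hs).sub (tendsto_cornerSum hr hs)
  simp_rw [squareSum_eq_dzetaA2PartialSum_add_cornerSum, add_sub_cancel_right, sub_zero] at h
  exact h.limUnder_eq
end

section
/- For an integer k ≥ 3, Σ_{s=2}^{k-1} ζ(overline{k-s}, s̄) = ζ(k̄) + ζ(k-1, 1̄) - ζ(overline{k-1}, 1̄). -/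
/-!
For `1 ≤ j < m` the geometric sum gives the partial fraction identity
`∑_{s=2}^{k-1} 1/(j^{k-s} m^s) = (1/j^{k-1} - 1/m^{k-1})/(m - j) - 1/(j^{k-1} m)`.
Summed with the signs `(-1)^{j+m}` over `j < m ≤ N`, the last term gives the truncation of
`ζ(overline{k-1}, 1̄)` and the first one a convolution of `(-1)^n/n` with `1/j^{k-1}`. Regrouping
that convolution yields the truncations of `ζ(k̄)` and `ζ(k-1, 1̄)`, up to an error in which each
`1/j^{k-1}` multiplies a tail `∑_{N-j < n < N} (-1)^n/n` of the alternating harmonic series. These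
tails are bounded by their first term, so the error tends to `0` by dominated convergence. The
double series with `s ≥ 2` converge absolutely, those with `s = 1` by Dirichlet's test.
-/

open Filter Finset Real

open Topology

theorem Antitone.sum_range_neg_one_pow_mul_mem_Icc {f : ℕ → ℝ} (hf : Antitone f)
    (hf0 : ∀ i, 0 ≤ f i) (n : ℕ) : ∑ i ∈ range n, (-1) ^ i * f i ∈ Set.Icc 0 (f 0) := by
  induction n generalizing f with
  | zero => simpa using hf0 0
  | succ n ih =>
    obtain ⟨h0, h1⟩ :=
      ih (hf.comp_monotone fun _ _ h => Nat.succ_le_succ h) (fun i => hf0 (i + 1))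
    have h10 : f 1 ≤ f 0 := hf zero_le_one
    simp only [Function.comp_apply] at h0 h1
    -- the sum for `f` is `f 0` minus the sum for `f ∘ succ`
    rw [sum_range_succ']
    simp only [pow_succ, mul_neg_one, neg_mul, sum_neg_distrib, pow_zero, one_mul]
    constructor <;> linarith

theorem Antitone.abs_sum_Ico_neg_one_pow_mul_le {f : ℕ → ℝ} (hf : Antitone f)
    (hf0 : ∀ i, 0 ≤ f i) (p n : ℕ) : |∑ i ∈ Ico p n, (-1) ^ i * f i| ≤ f p := by
  have hshift := (hf.comp_monotone fun _ _ h => Nat.add_le_add_left h p)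
    |>.sum_range_neg_one_pow_mul_mem_Icc (fun i => hf0 (p + i)) (n - p)
  simp only [Function.comp_apply, add_zero] at hshift
  rw [sum_Ico_eq_sum_range]
  simp_rw [pow_add, mul_assoc, ← mul_sum, abs_mul, abs_pow, abs_neg, abs_one, one_pow, one_mul]
  exact abs_le.2 ⟨by linarith [hshift.1, hf0 p], hshift.2⟩

theorem abs_sum_range_neg_one_pow_mul_sum_range_le {v : ℕ → ℝ} (hv : Summable v) (n : ℕ) :
    |∑ m ∈ range n, (-1) ^ m * ∑ j ∈ range (m + 1), v j| ≤ ∑' j, |v j| := by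
  have hswap : ∑ m ∈ range n, (-1) ^ m * ∑ j ∈ range (m + 1), v j
      = ∑ j ∈ range n, v j * ∑ m ∈ Ico j n, (-1 : ℝ) ^ m := by
    simp_rw [mul_sum, range_eq_Ico]
    rw [← sum_Ico_Ico_comm]
    exact sum_congr rfl fun _ _ => sum_congr rfl fun _ _ => mul_comm _ _
  have hsign (j : ℕ) : |∑ m ∈ Ico j n, (-1 : ℝ) ^ m| ≤ 1 := by
    simpa using (antitone_const (β := ℝ) (c := 1)).abs_sum_Ico_neg_one_pow_mul_le
      (fun _ => zero_le_one) j n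
  calc |∑ m ∈ range n, (-1) ^ m * ∑ j ∈ range (m + 1), v j|
      ≤ ∑ j ∈ range n, |v j| * |∑ m ∈ Ico j n, (-1 : ℝ) ^ m| := by
        rw [hswap]
        exact (abs_sum_le_sum_abs _ _).trans_eq (sum_congr rfl fun _ _ => abs_mul _ _)
    _ ≤ ∑ j ∈ range n, |v j| :=
        sum_le_sum fun j _ => mul_le_of_le_one_right (abs_nonneg _) (hsign j)
    _ ≤ ∑' j, |v j| := hv.abs.sum_le_tsum _ fun j _ => abs_nonneg _

theorem tendsto_sum_range_succ_mul_sub_of_summable {b c : ℕ → ℝ} (hb : Summable b)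
    (hc : Tendsto c atTop (𝓝 0)) :
    Tendsto (fun N => ∑ j ∈ range (N + 1), b j * c (N - j)) atTop (𝓝 0) := by
  obtain ⟨C, hC⟩ := isBounded_iff_forall_norm_le.1 (Metric.isBounded_range_of_tendsto c hc)
  have hC' (n : ℕ) : |c n| ≤ C := hC _ ⟨n, rfl⟩
  have hdom := tendsto_tsum_of_dominated_convergence (𝓕 := atTop)
    (f := fun N j => if j ≤ N then b j * c (N - j) else 0) (g := 0)
    (hb.abs.mul_right C) (fun j => ?_) (Eventually.of_forall fun N j => ?_)
  · simp only [Pi.zero_apply, tsum_zero] at hdom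
    refine hdom.congr fun N => ?_
    rw [tsum_eq_sum (s := range (N + 1)) fun j hj =>
      if_neg (by simpa [Nat.lt_succ_iff] using hj)]
    exact sum_congr rfl fun j hj => if_pos (Nat.lt_succ_iff.1 (mem_range.1 hj))
  · have hlim := (hc.comp (tendsto_sub_atTop_nat j)).const_mul (b j)
    rw [mul_zero] at hlim
    exact hlim.congr' ((eventually_ge_atTop j).mono fun N hN => (if_pos hN).symm)
  · split_ifs
    · rw [norm_mul, Real.norm_eq_abs, Real.norm_eq_abs]
      exact mul_le_mul_of_nonneg_left (hC' _) (abs_nonneg _)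
    · simpa using mul_nonneg (abs_nonneg (b j)) ((abs_nonneg _).trans (hC' 0))

theorem sum_Icc_one_div_pow_mul_pow {K : Type*} [Field K] {x y : K} (hx : x ≠ 0) (hy : y ≠ 0)
    (hxy : x ≠ y) (n : ℕ) :
    ∑ s ∈ Icc 2 (n + 1), 1 / (x ^ (n + 2 - s) * y ^ s)
      = (1 / x ^ (n + 1) - 1 / y ^ (n + 1)) / (y - x) - 1 / (x ^ (n + 1) * y) := by
  have hyx : y - x ≠ 0 := sub_ne_zero.2 hxy.symm
  induction n with
  | zero =>
    rw [Icc_eq_empty (by omega), sum_empty]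
    field_simp
    ring
  | succ n ih =>
    rw [sum_Icc_succ_top (by omega)]
    have hterm : ∀ s ∈ Icc 2 (n + 1), 1 / (x ^ (n + 1 + 2 - s) * y ^ s)
        = 1 / x * (1 / (x ^ (n + 2 - s) * y ^ s)) := by
      intro s hs
      rw [show n + 1 + 2 - s = n + 2 - s + 1 by grind, pow_succ]
      field_simp
    rw [sum_congr rfl hterm, ← mul_sum, ih, show n + 1 + 2 - (n + 1 + 1) = 1 by omega]
    field_simp
    ring

theorem sum_range_sum_range_mul_sub {R : Type*} [CommRing R] (a b : ℕ → R) (N : ℕ) :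
    ∑ m ∈ range N, ∑ j ∈ range (m + 1), a (m - j) * (b j - b (m + 1))
      = ∑ n ∈ range N, a n * ∑ j ∈ range (n + 1), b j
        - ∑ j ∈ range (N + 1), b j * ∑ n ∈ Ico (N - j) N, a n := by
  obtain ⟨A, hA⟩ : ∃ A : ℕ → R, ∀ p, ∑ n ∈ range p, a n = A p :=
    ⟨_, fun _ => rfl⟩
  have hconv : ∑ m ∈ range N, ∑ j ∈ range (m + 1), a (m - j) * b j
      = ∑ j ∈ range N, b j * A (N - j) := by
    simp_rw [← hA, mul_sum]
    rw [← sum_range_diag_flip N fun j n => b j * a n]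
    exact sum_congr rfl fun _ _ => sum_congr rfl fun _ _ => mul_comm _ _
  have hreflect (m : ℕ) : ∑ j ∈ range (m + 1), a (m - j) = A (m + 1) := by
    simpa [hA] using sum_range_reflect a (m + 1)
  have hswap : ∑ n ∈ range N, a n * ∑ j ∈ range (n + 1), b j
      = ∑ j ∈ range N, b j * (A N - A j) := by
    simp_rw [mul_sum, range_eq_Ico]
    rw [← sum_Ico_Ico_comm]
    refine sum_congr rfl fun j hj => ?_
    rw [← sum_mul, sum_Ico_eq_sub _ (mem_Ico.1 hj).2.le, hA, hA, mul_comm]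
  have htail : ∑ j ∈ range (N + 1), b j * ∑ n ∈ Ico (N - j) N, a n
      = ∑ j ∈ range (N + 1), b j * (A N - A (N - j)) :=
    sum_congr rfl fun j _ => by rw [sum_Ico_eq_sub _ (Nat.sub_le N j), hA, hA]
  have hshift : ∑ m ∈ range N, A (m + 1) * b (m + 1) = ∑ j ∈ range (N + 1), A j * b j := by
    rw [sum_range_succ' (fun j => A j * b j), ← hA 0, sum_range_zero, zero_mul, add_zero]
  simp_rw [mul_sub, sum_sub_distrib, hconv, ← sum_mul, hreflect, hswap, htail, hshift]
  simp only [sum_range_succ, Nat.sub_self, ← hA 0, sum_range_zero, mul_sub, sum_sub_distrib,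
    mul_comm (A _)]
  ring

-- `doubleZetaPartial u v N` sums `u m * v j` over `0 ≤ j < m ≤ N`; with the terms below, indexed
-- from `0`, it is the truncation of the double series at `m ≤ N + 1`, as in `dzetaA2`, `dzetaA3`.
noncomputable def zetaTerm (r j : ℕ) : ℝ := 1 / ((j : ℝ) + 1) ^ r

noncomputable def zetaATerm (r j : ℕ) : ℝ := (-1) ^ (j + 1) * zetaTerm r j

noncomputable def doubleZetaPartial (u v : ℕ → ℝ) (N : ℕ) : ℝ :=
  ∑ m ∈ range N, u (m + 1) * ∑ j ∈ range (m + 1), v j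

theorem zetaTerm_nonneg (r j : ℕ) : 0 ≤ zetaTerm r j := by
  unfold zetaTerm
  positivity

theorem antitone_zetaTerm (r : ℕ) : Antitone (zetaTerm r) := fun i j hij => by
  unfold zetaTerm
  gcongr

theorem summable_zetaTerm {r : ℕ} (hr : 2 ≤ r) : Summable (zetaTerm r) := by
  have h := (summable_nat_add_iff 1).2 (Real.summable_one_div_nat_pow.2 hr)
  unfold zetaTerm
  simpa using h

theorem tendsto_zetaTerm_one : Tendsto (zetaTerm 1) atTop (𝓝 0) := by
  unfold zetaTerm
  simpa using tendsto_one_div_add_atTop_nhds_zero_nat (𝕜 := ℝ)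

theorem summable_zetaATerm {r : ℕ} (hr : 2 ≤ r) : Summable (zetaATerm r) :=
  (summable_zetaTerm hr).of_norm_bounded fun j => by
    simp [zetaATerm, abs_of_nonneg (zetaTerm_nonneg r j)]

theorem zetaATerm_mul_zetaTerm (r s j : ℕ) :
    zetaATerm r j * zetaTerm s j = zetaATerm (r + s) j := by
  simp only [zetaATerm, zetaTerm, pow_add]
  ring

theorem abs_sum_Ico_zetaATerm_le (r p n : ℕ) :
    |∑ j ∈ Ico p n, zetaATerm r j| ≤ zetaTerm r p := by
  simpa [zetaATerm, pow_succ, sum_neg_distrib] using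
    (antitone_zetaTerm r).abs_sum_Ico_neg_one_pow_mul_le (zetaTerm_nonneg r) p n

theorem abs_sum_range_zetaATerm_le_one (r n : ℕ) : |∑ j ∈ range n, zetaATerm r j| ≤ 1 := by
  rw [range_eq_Ico]
  simpa [zetaTerm] using abs_sum_Ico_zetaATerm_le r 0 n

theorem sum_Icc_zetaATerm_mul_zetaATerm {k j m : ℕ} (hk : 2 ≤ k) (hjm : j ≤ m) :
    ∑ s ∈ Icc 2 (k - 1), zetaATerm s (m + 1) * zetaATerm (k - s) j
      = zetaATerm 1 (m - j) * (zetaTerm (k - 1) j - zetaTerm (k - 1) (m + 1))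
        - zetaATerm 1 (m + 1) * zetaATerm (k - 1) j := by
  obtain ⟨n, rfl⟩ : ∃ n, k = n + 2 := ⟨k - 2, by omega⟩
  obtain ⟨d, rfl⟩ := Nat.exists_eq_add_of_le hjm
  have hsign : (-1 : ℝ) ^ (j + d + 1 + 1) * (-1) ^ (j + 1) = (-1) ^ (d + 1) := by
    rw [← pow_add, show j + d + 1 + 1 + (j + 1) = d + 1 + 2 * (j + 1) by ring, pow_add, pow_mul]
    simp
  have hx : ((j : ℝ) + 1) ≠ 0 := by positivity
  have hy : ((j : ℝ) + d + 2) ≠ 0 := by positivity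
  have hxy : ((j : ℝ) + 1) ≠ (j : ℝ) + d + 2 :=
    ne_of_lt (by linarith [(d.cast_nonneg : (0 : ℝ) ≤ d)])
  have hpf := sum_Icc_one_div_pow_mul_pow hx hy hxy n
  have hterm : ∀ s ∈ Icc 2 (n + 2 - 1), zetaATerm s (j + d + 1) * zetaATerm (n + 2 - s) j
      = (-1) ^ (d + 1) * (1 / (((j : ℝ) + 1) ^ (n + 2 - s) * ((j : ℝ) + d + 2) ^ s)) := by
    intro s _
    simp only [zetaATerm, zetaTerm, ← hsign]
    push_cast
    ring
  rw [sum_congr rfl hterm, ← mul_sum, show n + 2 - 1 = n + 1 by omega, hpf,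
    show j + d - j = d by omega]
  simp only [zetaATerm, zetaTerm, ← hsign]
  push_cast
  field_simp
  ring

theorem cauchySeq_doubleZetaPartial_of_summable {u v : ℕ → ℝ} {C : ℝ} (hu : Summable u)
    (hv : ∀ n, |∑ j ∈ range n, v j| ≤ C) : CauchySeq (doubleZetaPartial u v) := by
  have hs : Summable fun m => u (m + 1) * ∑ j ∈ range (m + 1), v j :=
    (((summable_nat_add_iff 1).2 hu).abs.mul_right C).of_norm_bounded fun m => by
      rw [norm_mul, Real.norm_eq_abs, Real.norm_eq_abs]
      exact mul_le_mul_of_nonneg_left (hv _) (abs_nonneg _)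
  exact hs.hasSum.tendsto_sum_nat.cauchySeq

theorem cauchySeq_doubleZetaPartial_of_antitone {f v : ℕ → ℝ} (hf : Antitone f)
    (hf0 : Tendsto f atTop (𝓝 0)) (hv : Summable v) :
    CauchySeq (doubleZetaPartial (fun m => (-1) ^ (m + 1) * f m) v) := by
  have hdirichlet := (hf.comp_monotone fun _ _ h => Nat.succ_le_succ h)
    |>.cauchySeq_series_mul_of_tendsto_zero_of_bounded ((tendsto_add_atTop_iff_nat 1).2 hf0)
      fun n => (Real.norm_eq_abs _).trans_le (abs_sum_range_neg_one_pow_mul_sum_range_le hv n)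
  convert hdirichlet using 1
  funext N
  refine sum_congr rfl fun m _ => ?_
  simp only [Function.comp_apply, smul_eq_mul]
  ring

theorem dzetaA3_eq_limUnder (r s : ℕ) :
    dzetaA3 r s = limUnder atTop (doubleZetaPartial (zetaATerm s) (zetaATerm r)) := by
  unfold dzetaA3 doubleZetaPartial zetaATerm zetaTerm
  simp only [mul_one_div]
  congr! 4 with N m
  push_cast
  ring

theorem dzetaA2_eq_limUnder (r s : ℕ) :
    dzetaA2 r s = limUnder atTop (doubleZetaPartial (zetaATerm s) (zetaTerm r)) := by
  unfold dzetaA2 doubleZetaPartial zetaATerm zetaTerm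
  simp only [mul_one_div]
  congr! 4 with N m
  push_cast
  ring

theorem tendsto_zetaA {k : ℕ} (hk : 2 ≤ k) :
    Tendsto (fun N => ∑ n ∈ range N, zetaATerm k n) atTop (𝓝 (zetaA k)) := by
  have h := (summable_zetaATerm hk).hasSum.tendsto_sum_nat.cauchySeq.tendsto_limUnder
  rw [zetaA, if_neg (by omega)]
  simpa only [zetaATerm, zetaTerm, mul_one_div] using h

theorem tendsto_dzetaA3 (r : ℕ) {s : ℕ} (hs : 2 ≤ s) :
    Tendsto (doubleZetaPartial (zetaATerm s) (zetaATerm r)) atTop (𝓝 (dzetaA3 r s)) := by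
  rw [dzetaA3_eq_limUnder]
  exact (cauchySeq_doubleZetaPartial_of_summable (summable_zetaATerm hs)
    (abs_sum_range_zetaATerm_le_one r)).tendsto_limUnder

theorem tendsto_dzetaA3_one {r : ℕ} (hr : 2 ≤ r) :
    Tendsto (doubleZetaPartial (zetaATerm 1) (zetaATerm r)) atTop (𝓝 (dzetaA3 r 1)) := by
  rw [dzetaA3_eq_limUnder]
  exact (cauchySeq_doubleZetaPartial_of_antitone (antitone_zetaTerm 1) tendsto_zetaTerm_one
    (summable_zetaATerm hr)).tendsto_limUnder

theorem tendsto_dzetaA2_one {r : ℕ} (hr : 2 ≤ r) :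
    Tendsto (doubleZetaPartial (zetaATerm 1) (zetaTerm r)) atTop (𝓝 (dzetaA2 r 1)) := by
  rw [dzetaA2_eq_limUnder]
  exact (cauchySeq_doubleZetaPartial_of_antitone (antitone_zetaTerm 1) tendsto_zetaTerm_one
    (summable_zetaTerm hr)).tendsto_limUnder

theorem sum_range_zetaATerm_one_mul_sum_zetaTerm {k : ℕ} (hk : 1 ≤ k) (N : ℕ) :
    ∑ n ∈ range N, zetaATerm 1 n * ∑ j ∈ range (n + 1), zetaTerm (k - 1) j
      = ∑ n ∈ range N, zetaATerm k n
        + doubleZetaPartial (zetaATerm 1) (zetaTerm (k - 1)) (N - 1) := by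
  simp_rw [sum_range_succ _ (_ : ℕ), mul_add, sum_add_distrib, zetaATerm_mul_zetaTerm,
    show 1 + (k - 1) = k by omega, add_comm (∑ n ∈ range N, zetaATerm k n)]
  congr 1
  cases N with
  | zero => simp [doubleZetaPartial]
  | succ N => simp [doubleZetaPartial, sum_range_succ' _ N]

theorem sum_Icc_doubleZetaPartial {k : ℕ} (hk : 2 ≤ k) (N : ℕ) :
    ∑ s ∈ Icc 2 (k - 1), doubleZetaPartial (zetaATerm s) (zetaATerm (k - s)) N
      = ∑ n ∈ range N, zetaATerm k n
        + doubleZetaPartial (zetaATerm 1) (zetaTerm (k - 1)) (N - 1)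
        - doubleZetaPartial (zetaATerm 1) (zetaATerm (k - 1)) N
        - ∑ j ∈ range (N + 1), zetaTerm (k - 1) j * ∑ n ∈ Ico (N - j) N, zetaATerm 1 n := by
  have hpairs : ∑ s ∈ Icc 2 (k - 1), doubleZetaPartial (zetaATerm s) (zetaATerm (k - s)) N
      = ∑ m ∈ range N, ∑ j ∈ range (m + 1),
          zetaATerm 1 (m - j) * (zetaTerm (k - 1) j - zetaTerm (k - 1) (m + 1))
        - doubleZetaPartial (zetaATerm 1) (zetaATerm (k - 1)) N := by
    simp only [doubleZetaPartial, mul_sum]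
    rw [sum_comm, ← sum_sub_distrib]
    refine sum_congr rfl fun m _ => ?_
    rw [sum_comm, ← sum_sub_distrib]
    exact sum_congr rfl fun j hj =>
      sum_Icc_zetaATerm_mul_zetaATerm hk (Nat.lt_succ_iff.1 (mem_range.1 hj))
  rw [hpairs, sum_range_sum_range_mul_sub, sum_range_zetaATerm_one_mul_sum_zetaTerm (by omega)]
  ring

theorem tendsto_sum_zetaTerm_mul_sum_Ico_zetaATerm_one {r : ℕ} (hr : 2 ≤ r) :
    Tendsto (fun N => ∑ j ∈ range (N + 1),
      zetaTerm r j * ∑ n ∈ Ico (N - j) N, zetaATerm 1 n) atTop (𝓝 0) := by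
  refine squeeze_zero_norm (fun N => ?_)
    (tendsto_sum_range_succ_mul_sub_of_summable (summable_zetaTerm hr) tendsto_zetaTerm_one)
  refine (norm_sum_le _ _).trans (sum_le_sum fun j _ => ?_)
  rw [norm_mul, Real.norm_eq_abs, Real.norm_eq_abs, abs_of_nonneg (zetaTerm_nonneg r j)]
  exact mul_le_mul_of_nonneg_left (abs_sum_Ico_zetaATerm_le 1 _ N) (zetaTerm_nonneg r j)

theorem alt_sum_formula_2 (k : ℕ) (hk : 3 ≤ k) :
    ∑ s ∈ Finset.Icc 2 (k-1), dzetaA3 (k-s) s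
      = zetaA k + dzetaA2 (k-1) 1 - dzetaA3 (k-1) 1 := by
  have hlhs : Tendsto
      (fun N => ∑ s ∈ Icc 2 (k - 1), doubleZetaPartial (zetaATerm s) (zetaATerm (k - s)) N)
      atTop (𝓝 (∑ s ∈ Icc 2 (k - 1), dzetaA3 (k - s) s)) :=
    tendsto_finsetSum _ fun s hs => tendsto_dzetaA3 (k - s) (mem_Icc.1 hs).1
  have hrhs := (((tendsto_zetaA (by omega : 2 ≤ k)).add
    ((tendsto_dzetaA2_one (by omega : 2 ≤ k - 1)).comp (tendsto_sub_atTop_nat 1))).sub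
    (tendsto_dzetaA3_one (by omega : 2 ≤ k - 1))).sub
    (tendsto_sum_zetaTerm_mul_sum_Ico_zetaATerm_one (by omega : 2 ≤ k - 1))
  rw [sub_zero] at hrhs
  exact tendsto_nhds_unique hlhs (hrhs.congr fun N => (sum_Icc_doubleZetaPartial (by omega) N).symm)
end
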